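/- arXiv:2407.14384 — 2 statements merged into one kernel-verified Lean document; each statement's English description precedes it below -/
import Mathlib

section
/- For all natural numbers x, x', y, y' and all states q, q' of the two-counter automaton M, the following are equivalent: (1) the DFA A_M, walking on the grid instance G, transitions from configuration (x, y, q) to configuration (x', y', q') in exactly three steps; (2) the TCA M transitions from configuration (q, x, y) to configuration (q', x', y') in one step. -/
set_option maxHeartbeats 1000000

noncomputable section

open Classical

/-! ### Basic syntax: predicates, atoms, rules, databases, instances -/

/-- An abstract atom: a predicate identifier together with a list of
argument identifiers (variables in rules/queries, constants in databases). -/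
abbrev PAtom : Type := ℕ × List ℕ

/-- An existential rule `∀x∀y (α(x,y) → ∃z β(y,z))`, given by a body
(a finite conjunction/list of atoms over variables) and a single head atom.
Head variables not occurring in the body are (implicitly) existentially
quantified. -/
abbrev ERule : Type := List PAtom × PAtom

/-- A ruleset is a finite set (list) of existential rules. -/
abbrev Ruleset : Type := List ERule

/-- A database is a finite set (list) of facts, i.e. atoms over constants. -/
abbrev Database : Type := List PAtom

/-- Terms: constants, (labelled) nulls, and functional (Skolem) terms. -/
inductive GTerm : Type where
  | const : ℕ → GTerm
  | null : ℕ → GTerm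
  | func : ℕ → List GTerm → GTerm

instance : DecidableEq GTerm := Classical.decEq _

/-- A (ground) atom of an instance: a predicate with a list of terms. -/
structure GAtom : Type where
  pred : ℕ
  args : List GTerm

/-- An instance is a (possibly infinite) set of atoms (it is automatically
countable, as `GAtom` is a countable type). -/
abbrev Inst : Type := Set GAtom

/-- Applying a variable assignment to an abstract atom. -/
def substAtom (h : ℕ → GTerm) (a : PAtom) : GAtom := ⟨a.1, a.2.map h⟩

/-- The list of all variable occurrences in the body of a rule. -/
def bodyVarList (ρ : ERule) : List ℕ := ρ.1.foldr (fun a r => a.2 ++ r) []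

/-- The variables of the head of a rule. -/
def headVars (ρ : ERule) : List ℕ := ρ.2.2

/-- A join variable: a variable occurring more than once in the body. -/
def isJoinVar (ρ : ERule) (v : ℕ) : Prop := 1 < (bodyVarList ρ).count v

/-- The frontier of a rule: variables shared between body and head. -/
def frontierVars (ρ : ERule) : Set ℕ := {v | v ∈ bodyVarList ρ ∧ v ∈ headVars ρ}

/-- Existential variables of a rule: head variables not occurring in the body. -/
def existVars (ρ : ERule) : Set ℕ := {v | v ∈ headVars ρ ∧ v ∉ bodyVarList ρ}

/-- Satisfaction of an existential rule by an instance: every homomorphic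
match of the body extends to a match of the head. -/
def satRule (I : Inst) (ρ : ERule) : Prop :=
  ∀ h : ℕ → GTerm, (∀ a ∈ ρ.1, substAtom h a ∈ I) →
    ∃ g : ℕ → GTerm, (∀ v ∈ bodyVarList ρ, g v = h v) ∧ substAtom g ρ.2 ∈ I

/-- The instance corresponding to a database (constants interpreted as constants). -/
def dbInst (D : Database) : Inst := {α | ∃ a ∈ D, α = substAtom GTerm.const a}

/-- `I` is a model of the database `D` and the ruleset `R`. -/
def isModelOf (I : Inst) (D : Database) (R : Ruleset) : Prop :=
  dbInst D ⊆ I ∧ ∀ ρ ∈ R, satRule I ρ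

/-- The active domain of an instance. -/
def adom (I : Inst) : Set GTerm := {t | ∃ α ∈ I, t ∈ α.args}

/-! ### Paths and regular path queries -/

/-- A directed path from `s` to `t` in the instance `I` whose successive
binary-predicate edge labels spell the word `w`. -/
inductive IPath (I : Inst) : GTerm → List ℕ → GTerm → Prop where
  | nil (t : GTerm) : IPath I t [] t
  | cons {s t u : GTerm} {p : ℕ} {w : List ℕ} :
      (⟨p, [s, t]⟩ : GAtom) ∈ I → IPath I t w u → IPath I s (p :: w) u

/-- Satisfaction of the Boolean path query `∃x,y. L(x,y)` (with `x ≠ y`,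
`L` a word language over binary predicates) by an instance. -/
def satLang (I : Inst) (L : Set (List ℕ)) : Prop :=
  ∃ s t w, s ∈ adom I ∧ t ∈ adom I ∧ IPath I s w t ∧ w ∈ L

/-- Satisfaction of the Boolean RPQ `∃x,y. A(x,y)` given by a regular
expression `A` over binary predicates. -/
def satRPQ (I : Inst) (A : RegularExpression ℕ) : Prop := satLang I A.matches'

/-- Certain-answer entailment of a Boolean RPQ: every model of `D` and `R`
satisfies the query. -/
def entailsRPQ (D : Database) (R : Ruleset) (A : RegularExpression ℕ) : Prop :=
  ∀ I : Inst, isModelOf I D R → satRPQ I A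

/-! ### The Skolem chase (with Skolem symbols determined by the isomorphism
type of the instantiated rule head) -/

/-- The result of applying a trigger `(ρ, h)`: the instantiated head atom,
where each existential variable is replaced by a Skolem term whose function
symbol encodes the isomorphism type of the instantiated head query, applied
to the (distinct) frontier terms. -/
def skolemAtom (ρ : ERule) (h : ℕ → GTerm) : GAtom :=
  let bv := bodyVarList ρ
  let hargs : List (GTerm ⊕ ℕ) :=
    ρ.2.2.map (fun v => if v ∈ bv then Sum.inl (h v) else Sum.inr v)
  let fts : List GTerm := (hargs.filterMap Sum.getLeft?).dedup
  let evs : List ℕ := (hargs.filterMap Sum.getRight?).dedup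
  let pat : ℕ × List (ℕ ⊕ ℕ) :=
    (ρ.2.1, hargs.map (fun x =>
      match x with
      | Sum.inl t => Sum.inl (fts.findIdx (fun u => decide (u = t)))
      | Sum.inr v => Sum.inr (evs.findIdx (fun u => decide (u = v)))))
  ⟨ρ.2.1, ρ.2.2.map (fun v =>
    if v ∈ bv then h v
    else GTerm.func (Encodable.encode (pat, evs.findIdx (fun u => decide (u = v)))) fts)⟩

/-- One (parallel) chase step: apply all triggers of `R` in `I`. -/
def chaseStep (R : Set ERule) (I : Inst) : Inst :=
  I ∪ {α | ∃ ρ ∈ R, ∃ h : ℕ → GTerm, (∀ a ∈ ρ.1, substAtom h a ∈ I) ∧ α = skolemAtom ρ h}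

/-- The finite stages of the Skolem chase. -/
def chaseStage (R : Set ERule) (I : Inst) : ℕ → Inst
  | 0 => I
  | n + 1 => chaseStep R (chaseStage R I n)

/-- The Skolem chase of an instance `I` with a (possibly infinite) set of rules `R`. -/
def chase (I : Inst) (R : Set ERule) : Inst := ⋃ n, chaseStage R I n

/-- The set of rules of a (finite, syntactic) ruleset. -/
def rsSet (R : Ruleset) : Set ERule := {ρ | ρ ∈ R}

/-! ### Conjunctive queries, UCQs and finite unification sets -/

/-- Satisfaction of a CQ (list of atoms; `free` lists its free variables,
all other variables are existential) under the answer tuple `a`. -/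
def satCQ (I : Inst) (atoms : List PAtom) (free : List ℕ) (a : List GTerm) : Prop :=
  ∃ h : ℕ → GTerm, List.Forall₂ (fun v t => h v = t) free a ∧ ∀ β ∈ atoms, substAtom h β ∈ I

/-- A UCQ: a disjunction (list) of CQs sharing a tuple of free variables. -/
abbrev UCQ : Type := List (List PAtom) × List ℕ

/-- Satisfaction of a UCQ under the answer tuple `a`. -/
def satUCQ (I : Inst) (Q : UCQ) (a : List GTerm) : Prop := ∃ d ∈ Q.1, satCQ I d Q.2 a

/-- `R` is a finite unification set (fus): every UCQ has a UCQ rewriting. -/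
def isFUS (R : Ruleset) : Prop :=
  ∀ Q : UCQ, ∃ Q' : UCQ, Q'.2 = Q.2 ∧
    ∀ (D : Database) (a : List ℕ),
      (satUCQ (chase (dbInst D) (rsSet R)) Q (a.map GTerm.const) ↔
        satUCQ (dbInst D) Q' (a.map GTerm.const))

/-! ### Sticky and stellar rulesets -/

/-- Variable `v` appears at a position of the head of `ρ` marked by `m`. -/
def markedInHead (m : ℕ → Set ℕ) (ρ : ERule) (v : ℕ) : Prop :=
  ∃ i ∈ m ρ.2.1, ρ.2.2[i]? = some v

/-- `m` is a sticky marking for the set of rules `R`: every join variable of a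
rule appears at a marked position of its head atom, and every body variable at
a marked position appears at a marked position of the head atom. -/
def stickyMarking (m : ℕ → Set ℕ) (R : Set ERule) : Prop :=
  ∀ ρ ∈ R,
    (∀ v, isJoinVar ρ v → markedInHead m ρ v) ∧
    (∀ v, ∀ a ∈ ρ.1, (∃ i ∈ m a.1, a.2[i]? = some v) → markedInHead m ρ v)

/-- A (possibly infinite) set of rules is sticky iff it admits a sticky marking. -/
def isStickySet (R : Set ERule) : Prop := ∃ m, stickyMarking m R

/-- A ruleset is sticky iff it admits a sticky marking. -/
def isSticky (R : Ruleset) : Prop := isStickySet (rsSet R)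

/-- A stellar rule: at most one join variable, which must be a frontier
(head) variable. -/
def isStellarRule (ρ : ERule) : Prop :=
  (∀ v w, isJoinVar ρ v → isJoinVar ρ w → v = w) ∧
  ∀ v, isJoinVar ρ v → v ∈ headVars ρ

/-! ### Merging two terms of an instance -/

/-- The map replacing the terms `s` and `t` by `u`. -/
def mergeMap (s t u : GTerm) : GTerm → GTerm := fun v => if v = s ∨ v = t then u else v

/-- `I[s,t ↦ u]`: the instance obtained from `I` by replacing every
occurrence of `s` or `t` by `u`. -/
def mergeInst (I : Inst) (s t u : GTerm) : Inst :=
  (fun α => GAtom.mk α.pred (α.args.map (mergeMap s t u))) '' I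

/-! ### Stellar queries and stellar types -/

/-- A stellar query with free variable `y`: `y` is the only join variable and
each atom contains at most one occurrence of `y`. -/
def isSQ (atoms : List PAtom) (y : ℕ) : Prop :=
  (∀ v, v ≠ y → (atoms.foldr (fun a r => a.2 ++ r) []).count v ≤ 1) ∧
  ∀ a ∈ atoms, a.2.count y ≤ 1

/-- Satisfaction of a stellar query at the term `s`. -/
def satSQ (I : Inst) (atoms : List PAtom) (y : ℕ) (s : GTerm) : Prop :=
  ∃ h : ℕ → GTerm, h y = s ∧ ∀ a ∈ atoms, substAtom h a ∈ I

/-- Two terms have the same stellar type `★(s) = ★(t)` iff they satisfy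
exactly the same stellar queries (equivalently, their most specific stellar
queries are equivalent). -/
def sameStellarType (I : Inst) (s t : GTerm) : Prop :=
  ∀ (atoms : List PAtom) (y : ℕ), isSQ atoms y → (satSQ I atoms y s ↔ satSQ I atoms y t)

/-! ### Regular types -/

/-- The regular type `↑_A(t)` of a term w.r.t. a DFA: all pairs `(q, q')` such
that `t` has an outgoing path labelled by some word `w` with `δ*(q, w) = q'`. -/
def regType {σ : Type} (I : Inst) (dfa : DFA ℕ σ) (t : GTerm) : Set (σ × σ) :=
  {p | ∃ w u, IPath I t w u ∧ dfa.evalFrom p.1 w = p.2}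

/-! ### Homomorphisms between instances -/

/-- A homomorphism from `I` to `J`: a constant-preserving map on terms
sending every atom of `I` to an atom of `J`. -/
def isHom (h : GTerm → GTerm) (I J : Inst) : Prop :=
  (∀ c, h (GTerm.const c) = GTerm.const c) ∧
  ∀ α ∈ I, (⟨α.pred, α.args.map h⟩ : GAtom) ∈ J

/-! ### Backward rewriting (à la König et al.) -/

/-- Applying a variable renaming to an abstract atom. -/
def substP (σ : ℕ → ℕ) (a : PAtom) : PAtom := (a.1, a.2.map σ)

/-- The variables of a CQ. -/
def cqVars (Q : List PAtom) : Set ℕ := {v | ∃ a ∈ Q, v ∈ a.2}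

/-- The rule `ρ` is backward applicable to the CQ `Q` (with free variables
`Y`) with respect to the variable identification `σ` and the isomorphism `f`
from the head of `ρ` to an atom of `Q|σ`. -/
def backApp (ρ : ERule) (Y : Set ℕ) (Q : List PAtom) (σ f : ℕ → ℕ) : Prop :=
  (∀ y ∈ Y, σ y = y) ∧
  (∀ v, ∀ y ∈ Y, σ v = y → v = y) ∧
  substP f ρ.2 ∈ Q.map (substP σ) ∧
  (∀ v w, v ∈ headVars ρ → w ∈ headVars ρ → f v = f w → v = w) ∧
  (∀ z ∈ existVars ρ, f z ∉ Y) ∧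
  (∀ a ∈ Q.map (substP σ), (∃ z ∈ existVars ρ, f z ∈ a.2) → a = substP f ρ.2)

/-- One backward rewriting step on CQs with free variables `Y`, using a rule
of `R` with a minimal variable identification: the matched atom is replaced
by the rule body (with fresh non-frontier variables). -/
def backStep (R : Set ERule) (Y : Set ℕ) (Q Q' : List PAtom) : Prop :=
  ∃ ρ ∈ R, ∃ σ f g : ℕ → ℕ,
    backApp ρ Y Q σ f ∧
    (∀ σ' : ℕ → ℕ, (∀ v w, σ' v = σ' w → σ v = σ w) →
      (∃ v w, v ∈ cqVars Q ∧ w ∈ cqVars Q ∧ σ v = σ w ∧ σ' v ≠ σ' w) →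
      ¬ backApp ρ Y Q σ' f) ∧
    (∀ v ∈ frontierVars ρ, g v = f v) ∧
    (∀ v w, v ∈ bodyVarList ρ → v ∉ headVars ρ → w ∈ bodyVarList ρ → w ∉ headVars ρ →
      g v = g w → v = w) ∧
    (∀ v, v ∈ bodyVarList ρ → v ∉ headVars ρ →
      g v ∉ cqVars (Q.map (substP σ)) ∧ g v ∉ Y) ∧
    Q' = (Q.map (substP σ)).filter (fun a => decide (a ≠ substP f ρ.2)) ++ ρ.1.map (substP g)

/-- `rew(R)`: `R` together with all rules obtained from rules of `R` by
rewriting their bodies (with the frontier treated as free variables). -/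
def rewSet (R : Set ERule) : Set ERule :=
  R ∪ {ρ' | ∃ ρ ∈ R, ∃ q, Relation.ReflTransGen (backStep R (frontierVars ρ)) ρ.1 q ∧ ρ' = (q, ρ.2)}

/-! ### Frontier terms of chase atoms and quick rulesets -/

/-- `t` is a frontier term of the chase atom `β`: a term of `β` introduced
during the chase strictly earlier than `β`. -/
def isFrontierTermOf (I : Inst) (R : Set ERule) (β : GAtom) (t : GTerm) : Prop :=
  t ∈ β.args ∧ ∃ i, t ∈ adom (chaseStage R I i) ∧ β ∉ chaseStage R I i

/-- A set of rules is quick: every chase atom whose frontier terms all occur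
in the initial instance is already produced by the first chase step. -/
def isQuick (R : Set ERule) : Prop :=
  ∀ (I : Inst) (β : GAtom), β ∈ chase I R →
    (∀ t, isFrontierTermOf I R β t → t ∈ adom I) → β ∈ chaseStage R I 1

/-! ### Cores of rule bodies and the rulesets cr⁺(R), R⁺ -/

/-- A homomorphism between CQs fixing the variables in `Y` pointwise. -/
def cqHomTo (Y : Set ℕ) (q q' : List PAtom) : Prop :=
  ∃ h : ℕ → ℕ, (∀ y ∈ Y, h y = y) ∧ ∀ a ∈ q, substP h a ∈ q'

/-- `q'` is a core of `q` with the variables of `Y` treated as constants: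
a minimal sub-conjunction of `q` into which `q` homomorphically maps. -/
def isCoreOf (Y : Set ℕ) (q' q : List PAtom) : Prop :=
  (∀ a ∈ q', a ∈ q) ∧ cqHomTo Y q q' ∧
  ∀ q'' : List PAtom, (∀ a ∈ q'', a ∈ q') → cqHomTo Y q q'' → ∀ a ∈ q', a ∈ q''

/-- `ρ'` is (a) `core(ρ)`: same head, body a core of the body of `ρ` with the
frontier variables treated as constants. -/
def isCoreRuleOf (ρ' ρ : ERule) : Prop := ρ'.2 = ρ.2 ∧ isCoreOf (frontierVars ρ) ρ'.1 ρ.1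

/-- The rule obtained by substituting all join variables of `ρ` by one and
the same fresh variable. -/
def collapseJoins (ρ : ERule) : ERule :=
  let fv := ((bodyVarList ρ ++ headVars ρ).foldr max 0) + 1
  let c : ℕ → ℕ := fun v => if 1 < (bodyVarList ρ).count v then fv else v
  (ρ.1.map (substP c), substP c ρ.2)

/-- `cr⁺(R)`: the cores of the rules of `rew(R)` (via the core-choosing
function `C`), augmented, for every non-stellar such rule, with its variant
where all join variables are identified with a single fresh variable. -/
def crPlus (C : ERule → ERule) (R : Set ERule) : Set ERule :=
  (C '' rewSet R) ∪
  {ρ' | ∃ ρ ∈ rewSet R, ¬ isStellarRule (C ρ) ∧ ρ' = collapseJoins (C ρ)}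

/-- `R⁺`: `cr⁺(R)` with all rules having two or more join variables removed. -/
def rPlusOf (C : ERule → ERule) (R : Set ERule) : Set ERule :=
  {ρ ∈ crPlus C R | ¬ ∃ v w, isJoinVar ρ v ∧ isJoinVar ρ w ∧ v ≠ w}

/-! ### Two-counter automata, the grid database/ruleset, and the query DFA -/

/-- A (deterministic, Minsky-style) two-counter automaton. Each state `q`
carries the instruction
`if C == 0 then C += 1; goto qt q else C += d; goto qf q`,
where `C` is counter `x` if `cX q` and counter `y` otherwise, and `d = +1`
if `dPlus q` and `d = -1` otherwise. -/
structure TCA where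
  numStates : ℕ
  cX : Fin (numStates + 1) → Bool
  dPlus : Fin (numStates + 1) → Bool
  qt : Fin (numStates + 1) → Fin (numStates + 1)
  qf : Fin (numStates + 1) → Fin (numStates + 1)
  q0 : Fin (numStates + 1)
  qhalt : Fin (numStates + 1)

abbrev TCA.State (M : TCA) : Type := Fin (M.numStates + 1)

/-- One step of a two-counter automaton on a configuration `(q, x, y)`. -/
def TCA.step (M : TCA) : M.State × ℕ × ℕ → M.State × ℕ × ℕ := fun c =>
  let q := c.1
  let x := c.2.1
  let y := c.2.2
  if M.cX q then
    if x = 0 then (M.qt q, 1, y)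
    else (M.qf q, (if M.dPlus q then x + 1 else x - 1), y)
  else
    if y = 0 then (M.qt q, x, 1)
    else (M.qf q, x, (if M.dPlus q then y + 1 else y - 1))

/-- `M` halts when started in state `q0` with both counters zero. -/
def TCA.Halts (M : TCA) : Prop := ∃ k, ((M.step)^[k] (M.q0, 0, 0)).1 = M.qhalt

/-- The fixed predicate identifiers. -/
def pIncX : ℕ := 0
def pIncY : ℕ := 1
def pDecX : ℕ := 2
def pDecY : ℕ := 3
def pXZero : ℕ := 4
def pYZero : ℕ := 5
def pSucc : ℕ := 6
def pZero : ℕ := 7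
def pGridPoint : ℕ := 8
def pXCoord : ℕ := 9
def pYCoord : ℕ := 10

/-- `Σ(C += 1)` for the counter selected by `b` (`true` = counter x). -/
def sIncr (b : Bool) : ℕ := if b then pIncX else pIncY
/-- `Σ(C -= 1)`. -/
def sDecr (b : Bool) : ℕ := if b then pDecX else pDecY
/-- `Σ(C == 0)`. -/
def sZero (b : Bool) : ℕ := if b then pXZero else pYZero

/-- The states of the DFA `A_M`: the states of `M` plus four auxiliary states
(then₁, then₂, else₁, else₂) per state of `M`, plus a sink (`none`). -/
abbrev AState (M : TCA) : Type := Option (M.State ⊕ M.State × Fin 4)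

/-- The transition function of the DFA `A_M`: the instruction of each state
`q` of `M` is compiled into the 'then' branch reading
`Σ(C==0), Σ(C==0), Σ(C+=1)` (ending in `qt q`) and the 'else' branch reading
`Σ(C-=1), Σ(C+=1), Σ(C+=d)` (ending in `qf q`). -/
def TCA.delta (M : TCA) : AState M → ℕ → AState M
  | none, _ => none
  | some (Sum.inl q), a =>
    if a = sZero (M.cX q) then some (Sum.inr (q, (0 : Fin 4)))
    else if a = sDecr (M.cX q) then some (Sum.inr (q, (2 : Fin 4)))
    else none
  | some (Sum.inr (q, i)), a =>
    if i = (0 : Fin 4) then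
      (if a = sZero (M.cX q) then some (Sum.inr (q, (1 : Fin 4))) else none)
    else if i = (1 : Fin 4) then
      (if a = sIncr (M.cX q) then some (Sum.inl (M.qt q)) else none)
    else if i = (2 : Fin 4) then
      (if a = sIncr (M.cX q) then some (Sum.inr (q, (3 : Fin 4))) else none)
    else
      (if a = (if M.dPlus q then sIncr (M.cX q) else sDecr (M.cX q))
        then some (Sum.inl (M.qf q)) else none)

/-- The DFA `A_M` simulating the TCA `M`; its starting (accepting) state is
the starting (halting) state of `M`. -/
def tcaDFA (M : TCA) : DFA ℕ (AState M) :=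
  ⟨M.delta, some (Sum.inl M.q0), {some (Sum.inl M.qhalt)}⟩

/-- The fixed database `D_grid = {Succ(a,b), Zero(a)}` (constants `a = 0`, `b = 1`). -/
def Dgrid : Database := [(pSucc, [0, 1]), (pZero, [0])]

/-- The fixed grid-building ruleset `R_grid`. -/
def Rgrid : Ruleset :=
  [ ([(pSucc, [0, 1])], (pSucc, [1, 2])),
    ([(pSucc, [0, 1]), (pSucc, [2, 3])], (pGridPoint, [0, 2, 4])),
    ([(pGridPoint, [0, 1, 2])], (pXCoord, [2, 0])),
    ([(pGridPoint, [0, 1, 2])], (pYCoord, [2, 1])),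
    ([(pXCoord, [3, 0]), (pYCoord, [3, 2]), (pXCoord, [4, 1]), (pYCoord, [4, 2]),
       (pSucc, [0, 1])], (pIncX, [3, 4])),
    ([(pXCoord, [3, 0]), (pYCoord, [3, 2]), (pXCoord, [4, 0]), (pYCoord, [4, 5]),
       (pSucc, [2, 5])], (pIncY, [3, 4])),
    ([(pIncX, [0, 1])], (pDecX, [1, 0])),
    ([(pIncY, [0, 1])], (pDecY, [1, 0])),
    ([(pXCoord, [0, 1]), (pZero, [1])], (pXZero, [0, 0])),
    ([(pYCoord, [0, 1]), (pZero, [1])], (pYZero, [0, 0])) ]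

/-- The grid point with coordinates `(x, y)`. -/
def gpt (x y : ℕ) : GTerm := GTerm.func 0 [GTerm.const x, GTerm.const y]

/-- The infinite grid instance `G`: terms are coordinate pairs, with
`IncX`/`IncY`/`DecX`/`DecY` edges and `XZero`/`YZero` self-loops. -/
def GridInst : Inst :=
  {α | (∃ x y, α = ⟨pIncX, [gpt x y, gpt (x + 1) y]⟩) ∨
       (∃ x y, α = ⟨pIncY, [gpt x y, gpt x (y + 1)]⟩) ∨
       (∃ x y, α = ⟨pDecX, [gpt (x + 1) y, gpt x y]⟩) ∨
       (∃ x y, α = ⟨pDecY, [gpt x (y + 1), gpt x y]⟩) ∨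
       (∃ y, α = ⟨pXZero, [gpt 0 y, gpt 0 y]⟩) ∨
       (∃ x, α = ⟨pYZero, [gpt x 0, gpt x 0]⟩)}

/-- One step of the DFA `A_M` walking over the instance `I`: move along an
edge of `I` whose label matches a transition from the current state. -/
def walkStep (M : TCA) (I : Inst) (c c' : AState M × GTerm) : Prop :=
  ∃ p, (⟨p, [c.2, c'.2]⟩ : GAtom) ∈ I ∧ M.delta c.1 p = c'.1

/-! ### Encoding regular expressions (for computability statements) -/

/-- A concrete injective serialization of regular expressions (over an
encodable alphabet) as lists of naturals. -/
def encodeREg {α : Type} [Encodable α] : RegularExpression α → List ℕ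
  | RegularExpression.zero => [0]
  | RegularExpression.epsilon => [1]
  | RegularExpression.char a => [2, Encodable.encode a]
  | RegularExpression.plus a b => 3 :: (encodeREg a ++ encodeREg b)
  | RegularExpression.comp a b => 4 :: (encodeREg a ++ encodeREg b)
  | RegularExpression.star a => 5 :: encodeREg a

/-! ### Datalog rules, two-way and higher-arity path queries -/

/-- A Datalog rule: no existential variables in the head. -/
def isDatalogRule (ρ : ERule) : Prop := ∀ v ∈ ρ.2.2, v ∈ bodyVarList ρ

/-- The predicates occurring in a database. -/
def dbPreds (D : Database) : Set ℕ := {p | ∃ a ∈ D, a.1 = p}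

/-- The predicates occurring in a ruleset. -/
def rsPreds (R : Ruleset) : Set ℕ := {p | ∃ ρ ∈ R, (∃ a ∈ ρ.1, a.1 = p) ∨ ρ.2.1 = p}

/-- The predicates occurring in rule heads of a ruleset. -/
def headPreds (R : Ruleset) : Set ℕ := {p | ∃ ρ ∈ R, ρ.2.1 = p}

/-- A two-way path: `inl p` traverses a `p`-edge forwards, `inr p` (i.e. `p⁻`)
traverses a `p`-edge backwards. -/
inductive IPath2 (I : Inst) : GTerm → List (ℕ ⊕ ℕ) → GTerm → Prop where
  | nil (t : GTerm) : IPath2 I t [] t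
  | fwd {s t u : GTerm} {p : ℕ} {w : List (ℕ ⊕ ℕ)} :
      (⟨p, [s, t]⟩ : GAtom) ∈ I → IPath2 I t w u → IPath2 I s (Sum.inl p :: w) u
  | bwd {s t u : GTerm} {p : ℕ} {w : List (ℕ ⊕ ℕ)} :
      (⟨p, [t, s]⟩ : GAtom) ∈ I → IPath2 I t w u → IPath2 I s (Sum.inr p :: w) u

/-- Satisfaction of a Boolean 2RPQ given by a regular expression over
`Σ ∪ Σ⁻`. -/
def sat2RPQ (I : Inst) (A : RegularExpression (ℕ ⊕ ℕ)) : Prop :=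
  ∃ s t w, s ∈ adom I ∧ t ∈ adom I ∧ IPath2 I s w t ∧ w ∈ A.matches'

/-- Entailment of a Boolean 2RPQ. -/
def entails2RPQ (D : Database) (R : Ruleset) (A : RegularExpression (ℕ ⊕ ℕ)) : Prop :=
  ∀ I : Inst, isModelOf I D R → sat2RPQ I A

/-- A higher-arity path: an atom `P(t₁, t₂, …, tₙ)` (arity ≥ 2) contributes a
`P`-labelled edge from `t₁` to `t₂`. -/
inductive HPath (I : Inst) : GTerm → List ℕ → GTerm → Prop where
  | nil (t : GTerm) : HPath I t [] t
  | cons {s t u : GTerm} {p : ℕ} {w : List ℕ} (rest : List GTerm) :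
      (⟨p, s :: t :: rest⟩ : GAtom) ∈ I → HPath I t w u → HPath I s (p :: w) u

/-- Satisfaction of a Boolean higher-arity RPQ (HRPQ). -/
def satHRPQ (I : Inst) (A : RegularExpression ℕ) : Prop :=
  ∃ s t w, s ∈ adom I ∧ t ∈ adom I ∧ HPath I s w t ∧ w ∈ A.matches'

/-- Entailment of a Boolean HRPQ. -/
def entailsHRPQ (D : Database) (R : Ruleset) (A : RegularExpression ℕ) : Prop :=
  ∀ I : Inst, isModelOf I D R → satHRPQ I A

/-- A ruleset is finitely RPQ-controllable: every non-entailed Boolean RPQ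
has a finite countermodel. -/
def finitelyRPQControllable (R : Ruleset) : Prop :=
  ∀ (A : RegularExpression ℕ) (D : Database),
    ¬ entailsRPQ D R A → ∃ I : Inst, I.Finite ∧ isModelOf I D R ∧ ¬ satRPQ I A

/-! From a state `q` of `M`, the only three-letter words that lead `A_M` back to a state of `M`
are the compiled then-word and else-word of `q`, told apart by their first letter. In the grid,
the then-word labels a path from `(x, y)` iff the tested counter is zero (the `Zero` self-loops),
and the path ends where that counter is one; the else-word labels a path iff the counter is
nonzero (the decrement needs a predecessor), and since the decrement and the increment cancel, the
path ends where the counter has moved by `d`. These are the two cases of a step of `M`. -/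

theorem IPath.cons_iff {I : Inst} {s u : GTerm} {p : ℕ} {w : List ℕ} :
    IPath I s (p :: w) u ↔ ∃ t, (⟨p, [s, t]⟩ : GAtom) ∈ I ∧ IPath I t w u :=
  ⟨fun | .cons hst htu => ⟨_, hst, htu⟩, fun ⟨_, hst, htu⟩ => .cons hst htu⟩

theorem IPath.nil_iff {I : Inst} {s u : GTerm} : IPath I s [] u ↔ s = u :=
  ⟨fun | .nil _ => rfl, fun h => h ▸ .nil s⟩

theorem exists_walkStep_three_iff (M : TCA) (I : Inst) (s s' : AState M) (u u' : GTerm) :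
    (∃ c₁ c₂, walkStep M I (s, u) c₁ ∧ walkStep M I c₁ c₂ ∧ walkStep M I c₂ (s', u')) ↔
      ∃ w : List ℕ, (w.length = 3 ∧ (tcaDFA M).evalFrom s w = s') ∧ IPath I u w u' := by
  constructor
  · rintro ⟨⟨s₁, u₁⟩, ⟨s₂, u₂⟩, ⟨p₁, h₁, rfl⟩, ⟨p₂, h₂, rfl⟩, ⟨p₃, h₃, rfl⟩⟩
    exact ⟨[p₁, p₂, p₃], ⟨rfl, rfl⟩, .cons h₁ (.cons h₂ (.cons h₃ (.nil _)))⟩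
  · rintro ⟨w, ⟨hw, rfl⟩, hpath⟩
    obtain ⟨p₁, p₂, p₃, rfl⟩ := List.length_eq_three.mp hw
    obtain ⟨_, h₁, _, h₂, _, h₃, rfl⟩ := by
      simpa only [IPath.cons_iff, IPath.nil_iff] using hpath
    exact ⟨(M.delta s p₁, _), (M.delta (M.delta s p₁) p₂, _), ⟨p₁, h₁, rfl⟩, ⟨p₂, h₂, rfl⟩,
      ⟨p₃, h₃, rfl⟩⟩

def thenWord (b : Bool) : List ℕ := [sZero b, sZero b, sIncr b]

def elseWord (b d : Bool) : List ℕ := [sDecr b, sIncr b, if d then sIncr b else sDecr b]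

theorem sZero_ne_sDecr (b : Bool) : sZero b ≠ sDecr b := by
  cases b <;> decide

namespace TCA

variable (M : TCA) (q : M.State) (a : ℕ)

theorem delta_inl : M.delta (some (.inl q)) a =
    if a = sZero (M.cX q) then some (.inr (q, 0))
    else if a = sDecr (M.cX q) then some (.inr (q, 2)) else none := rfl

@[simp] theorem delta_none : M.delta none a = none := rfl

@[simp] theorem delta_then₁ : M.delta (some (.inr (q, 0))) a =
    if a = sZero (M.cX q) then some (.inr (q, 1)) else none := rfl

@[simp] theorem delta_then₂ : M.delta (some (.inr (q, 1))) a =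
    if a = sIncr (M.cX q) then some (.inl (M.qt q)) else none := rfl

@[simp] theorem delta_else₁ : M.delta (some (.inr (q, 2))) a =
    if a = sIncr (M.cX q) then some (.inr (q, 3)) else none := rfl

@[simp] theorem delta_else₂ : M.delta (some (.inr (q, 3))) a =
    if a = (if M.dPlus q then sIncr (M.cX q) else sDecr (M.cX q)) then some (.inl (M.qf q))
    else none := rfl

end TCA

theorem tcaDFA_evalFrom_inl_iff (M : TCA) (q q' : M.State) (w : List ℕ) :
    w.length = 3 ∧ (tcaDFA M).evalFrom (some (.inl q)) w = some (.inl q') ↔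
      (w = thenWord (M.cX q) ∧ M.qt q = q') ∨
        (w = elseWord (M.cX q) (M.dPlus q) ∧ M.qf q = q') := by
  rw [List.length_eq_three]
  constructor
  · rintro ⟨⟨a₁, a₂, a₃, rfl⟩, heval⟩
    have := sZero_ne_sDecr (M.cX q)
    simp only [DFA.evalFrom, List.foldl, tcaDFA, TCA.delta_inl] at heval
    split_ifs at heval <;> simp_all [apply_ite (M.delta · a₃), thenWord, elseWord]
  · have := (sZero_ne_sDecr (M.cX q)).symm
    rintro (⟨rfl, rfl⟩ | ⟨rfl, rfl⟩) <;>
      simp [thenWord, elseWord, DFA.evalFrom, tcaDFA, TCA.delta_inl, this]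

def counter (b : Bool) (x y : ℕ) : ℕ := if b then x else y

def setCounter (b : Bool) (x y c : ℕ) : ℕ × ℕ := if b then (c, y) else (x, c)

theorem TCA.step_eq (M : TCA) (q : M.State) (x y : ℕ) :
    M.step (q, x, y) =
      if counter (M.cX q) x y = 0 then (M.qt q, setCounter (M.cX q) x y 1)
      else (M.qf q, setCounter (M.cX q) x y
        (if M.dPlus q then counter (M.cX q) x y + 1 else counter (M.cX q) x y - 1)) := by
  cases h : M.cX q <;> simp [TCA.step, counter, setCounter, h]

theorem gpt_inj {a b c d : ℕ} : gpt a b = gpt c d ↔ a = c ∧ b = d := by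
  simp [gpt]

theorem sZero_mem_gridInst_iff (b : Bool) (x y : ℕ) (t : GTerm) :
    (⟨sZero b, [gpt x y, t]⟩ : GAtom) ∈ GridInst ↔ counter b x y = 0 ∧ t = gpt x y := by
  cases b <;>
    simp [GridInst, counter, sZero, pIncX, pIncY, pDecX, pDecY, pXZero, pYZero, gpt_inj] <;>
    rintro rfl <;> rfl

theorem sIncr_mem_gridInst_iff (b : Bool) (x y : ℕ) (t : GTerm) :
    (⟨sIncr b, [gpt x y, t]⟩ : GAtom) ∈ GridInst ↔
      t = if b then gpt (x + 1) y else gpt x (y + 1) := by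
  cases b <;> simp [GridInst, sIncr, pIncX, pIncY, pDecX, pDecY, pXZero, pYZero, gpt_inj]

theorem sDecr_mem_gridInst_iff (b : Bool) (x y : ℕ) (t : GTerm) :
    (⟨sDecr b, [gpt x y, t]⟩ : GAtom) ∈ GridInst ↔
      counter b x y ≠ 0 ∧ t = if b then gpt (x - 1) y else gpt x (y - 1) := by
  cases b <;>
    simp [GridInst, counter, sDecr, pIncX, pIncY, pDecX, pDecY, pXZero, pYZero, gpt_inj] <;>
    exact ⟨fun ⟨n, hn, ht⟩ => ⟨by omega, by rw [ht, hn]; rfl⟩, fun ⟨h, ht⟩ => ⟨_, by omega, ht⟩⟩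

theorem iPath_gridInst_thenWord_iff (b : Bool) (x y x' y' : ℕ) :
    IPath GridInst (gpt x y) (thenWord b) (gpt x' y') ↔
      counter b x y = 0 ∧ setCounter b x y 1 = (x', y') := by
  cases b <;> simp [thenWord, counter, setCounter, IPath.cons_iff, IPath.nil_iff, gpt_inj,
    sZero_mem_gridInst_iff, sIncr_mem_gridInst_iff] <;> omega

theorem iPath_gridInst_elseWord_iff (b d : Bool) (x y x' y' : ℕ) :
    IPath GridInst (gpt x y) (elseWord b d) (gpt x' y') ↔
      counter b x y ≠ 0 ∧
        setCounter b x y (if d then counter b x y + 1 else counter b x y - 1) = (x', y') := by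
  cases b <;> cases d <;> simp [elseWord, counter, setCounter, IPath.cons_iff, IPath.nil_iff,
    gpt_inj, sDecr_mem_gridInst_iff, sIncr_mem_gridInst_iff] <;> omega

/-- For all naturals `x, x', y, y'` and states `q, q'` of the
TCA `M`: the DFA `A_M`, walking on the grid instance `G`, transitions from
configuration `(x, y, q)` to `(x', y', q')` in exactly three steps iff `M`
transitions from `(q, x, y)` to `(q', x', y')` in one step. -/
theorem walk_three_steps_iff_tca_step (M : TCA) (x x' y y' : ℕ) (q q' : M.State) :
    (∃ c₁ c₂ : AState M × GTerm,
      walkStep M GridInst (some (Sum.inl q), gpt x y) c₁ ∧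
      walkStep M GridInst c₁ c₂ ∧
      walkStep M GridInst c₂ (some (Sum.inl q'), gpt x' y')) ↔
    M.step (q, x, y) = (q', x', y') := by
  simp only [exists_walkStep_three_iff, tcaDFA_evalFrom_inl_iff, or_and_right, exists_or,
    and_assoc, exists_eq_left]
  rw [iPath_gridInst_thenWord_iff, iPath_gridInst_elseWord_iff, TCA.step_eq]
  by_cases hzero : counter (M.cX q) x y = 0 <;> simp [hzero]
end
end

section
/- Let I be an instance, R a sticky ruleset, and t a term of chase(I,R) with birth atom α. If some term t' occurs at a marked position in α, then every atom β of chase(I,R) containing t also contains t' at a marked position. -/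
set_option maxHeartbeats 1000000

noncomputable section

open Classical

/-! A term born in the chase is a Skolem term whose function symbol encodes the pattern of the
instantiated head and whose arguments are the frontier terms, so it determines its birth atom `α`.
Hence every other atom containing `t` was produced by a trigger that copied `t` from a body atom,
and by induction on the chase stages that body atom holds `t'` at a marked position; stickiness
carries marked body terms to marked head positions. -/

lemma mem_bodyVarList {ρ : ERule} {v : ℕ} :
    v ∈ bodyVarList ρ ↔ ∃ a ∈ ρ.1, v ∈ a.2 := by
  rw [bodyVarList]
  induction ρ.1 with
  | nil => simp
  | cons a l ih =>
    simp only [List.foldr_cons, List.mem_append, ih, List.mem_cons, exists_eq_or_imp]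

def bodyTerms (ρ : ERule) (h : ℕ → GTerm) : Set GTerm :=
  {t | ∃ a ∈ ρ.1, t ∈ (substAtom h a).args}

def headArgs (ρ : ERule) (h : ℕ → GTerm) : List (GTerm ⊕ ℕ) :=
  ρ.2.2.map (fun v => if v ∈ bodyVarList ρ then Sum.inl (h v) else Sum.inr v)

def frontierTermsOf (ρ : ERule) (h : ℕ → GTerm) : List GTerm :=
  ((headArgs ρ h).filterMap Sum.getLeft?).dedup

def existVarsOf (ρ : ERule) (h : ℕ → GTerm) : List ℕ :=
  ((headArgs ρ h).filterMap Sum.getRight?).dedup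

def headPattern (ρ : ERule) (h : ℕ → GTerm) : ℕ × List (ℕ ⊕ ℕ) :=
  (ρ.2.1, (headArgs ρ h).map (fun x => match x with
    | Sum.inl t => Sum.inl ((frontierTermsOf ρ h).findIdx (fun u => decide (u = t)))
    | Sum.inr v => Sum.inr ((existVarsOf ρ h).findIdx (fun u => decide (u = v)))))

def skolemTerm (ρ : ERule) (h : ℕ → GTerm) (v : ℕ) : GTerm :=
  GTerm.func
    (Encodable.encode (headPattern ρ h, (existVarsOf ρ h).findIdx (fun u => decide (u = v))))
    (frontierTermsOf ρ h)

def atomOfPattern (pat : ℕ × List (ℕ ⊕ ℕ)) (fts : List GTerm) : GAtom :=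
  ⟨pat.1, pat.2.map (fun x => match x with
    | Sum.inl k => fts.getD k (GTerm.const 0)
    | Sum.inr j => GTerm.func (Encodable.encode (pat, j)) fts)⟩

lemma skolemAtom_args (ρ : ERule) (h : ℕ → GTerm) :
    (skolemAtom ρ h).args =
      ρ.2.2.map (fun v => if v ∈ bodyVarList ρ then h v else skolemTerm ρ h v) := rfl

lemma List.getD_findIdx_eq {β : Type*} [DecidableEq β] {l : List β} {x : β} (d : β)
    (hx : x ∈ l) : l.getD (l.findIdx (fun u => decide (u = x))) d = x := by
  have hlt : l.findIdx (fun u => decide (u = x)) < l.length :=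
    List.findIdx_lt_length_of_exists ⟨x, hx, by simp⟩
  have hget := List.findIdx_getElem (p := fun u => decide (u = x)) (w := hlt)
  simp only [decide_eq_true_eq] at hget
  simp [List.getD_eq_getElem?_getD, List.getElem?_eq_getElem hlt, hget]

lemma mem_frontierTermsOf {ρ : ERule} {h : ℕ → GTerm} {v : ℕ} (hv : v ∈ ρ.2.2)
    (hb : v ∈ bodyVarList ρ) : h v ∈ frontierTermsOf ρ h := by
  rw [frontierTermsOf, headArgs, List.mem_dedup, List.mem_filterMap]
  exact ⟨Sum.inl (h v), List.mem_map.2 ⟨v, hv, by simp [hb]⟩, rfl⟩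

lemma skolemAtom_eq_atomOfPattern (ρ : ERule) (h : ℕ → GTerm) :
    skolemAtom ρ h = atomOfPattern (headPattern ρ h) (frontierTermsOf ρ h) := by
  show GAtom.mk _ _ = GAtom.mk _ _
  congr 1
  simp only [headPattern, headArgs, List.map_map]
  refine List.map_congr_left fun v hv => ?_
  by_cases hb : v ∈ bodyVarList ρ
  · simp only [Function.comp_apply, if_pos hb]
    exact (List.getD_findIdx_eq _ (mem_frontierTermsOf hv hb)).symm
  · simp only [Function.comp_apply, if_neg hb]
    rfl

lemma skolemAtom_eq_of_skolemTerm_eq {ρ ρ' : ERule} {h h' : ℕ → GTerm} {v v' : ℕ}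
    (heq : skolemTerm ρ h v = skolemTerm ρ' h' v') : skolemAtom ρ h = skolemAtom ρ' h' := by
  injection heq with hcode hfts
  have hpat : headPattern ρ h = headPattern ρ' h' :=
    congrArg Prod.fst (Encodable.encode_injective hcode)
  rw [skolemAtom_eq_atomOfPattern, skolemAtom_eq_atomOfPattern, hpat, hfts]

lemma exists_skolemTerm_eq_of_mem_args {ρ : ERule} {h : ℕ → GTerm} {t : GTerm}
    (ht : t ∈ (skolemAtom ρ h).args) (hfresh : t ∉ bodyTerms ρ h) :
    ∃ v, skolemTerm ρ h v = t := by
  rw [skolemAtom_args, List.mem_map] at ht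
  obtain ⟨v, -, hvt⟩ := ht
  by_cases hb : v ∈ bodyVarList ρ
  · obtain ⟨a, ha, hva⟩ := mem_bodyVarList.1 hb
    rw [if_pos hb] at hvt
    exact absurd ⟨a, ha, List.mem_map.2 ⟨v, hva, hvt⟩⟩ hfresh
  · rw [if_neg hb] at hvt
    exact ⟨v, hvt⟩

lemma skolemAtom_eq_of_fresh_mem_args {ρ ρ' : ERule} {h h' : ℕ → GTerm} {t : GTerm}
    (ht : t ∈ (skolemAtom ρ h).args) (hfresh : t ∉ bodyTerms ρ h)
    (ht' : t ∈ (skolemAtom ρ' h').args) (hfresh' : t ∉ bodyTerms ρ' h') :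
    skolemAtom ρ h = skolemAtom ρ' h' := by
  obtain ⟨v, hv⟩ := exists_skolemTerm_eq_of_mem_args ht hfresh
  obtain ⟨v', hv'⟩ := exists_skolemTerm_eq_of_mem_args ht' hfresh'
  exact skolemAtom_eq_of_skolemTerm_eq (hv.trans hv'.symm)

def markedIn (m : ℕ → Set ℕ) (β : GAtom) (t : GTerm) : Prop :=
  ∃ j ∈ m β.pred, β.args[j]? = some t

lemma markedIn_skolemAtom {m : ℕ → Set ℕ} {R : Set ERule} (hm : stickyMarking m R)
    {ρ : ERule} (hρ : ρ ∈ R) {h : ℕ → GTerm} {a : PAtom} (ha : a ∈ ρ.1) {t : GTerm}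
    (hmarked : markedIn m (substAtom h a) t) : markedIn m (skolemAtom ρ h) t := by
  obtain ⟨k, hk, hkt⟩ := hmarked
  change (a.2.map h)[k]? = some t at hkt
  rw [List.getElem?_map, Option.map_eq_some_iff] at hkt
  obtain ⟨w, hw, rfl⟩ := hkt
  obtain ⟨j, hj, hjw⟩ := (hm ρ hρ).2 w a ha ⟨k, hk, hw⟩
  have hwb : w ∈ bodyVarList ρ := mem_bodyVarList.2 ⟨a, ha, List.mem_of_getElem? hw⟩
  refine ⟨j, hj, ?_⟩
  rw [skolemAtom_args, List.getElem?_map, hjw, Option.map_some, if_pos hwb]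

lemma chaseStage_mono (R : Set ERule) (I : Inst) : Monotone (chaseStage R I) :=
  monotone_nat_of_le_succ fun _ => Set.subset_union_left

lemma mem_chaseStage_succ {R : Set ERule} {I : Inst} {n : ℕ} {β : GAtom} :
    β ∈ chaseStage R I (n + 1) ↔ β ∈ chaseStage R I n ∨
      ∃ ρ ∈ R, ∃ h : ℕ → GTerm, (∀ a ∈ ρ.1, substAtom h a ∈ chaseStage R I n) ∧
        β = skolemAtom ρ h := Iff.rfl

lemma markedIn_of_mem_chaseStage {m : ℕ → Set ℕ} {R : Set ERule} (hm : stickyMarking m R)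
    {I : Inst} {ρ₀ : ERule} {h₀ : ℕ → GTerm} {t t' : GTerm} (hI : t ∉ adom I)
    (ht : t ∈ (skolemAtom ρ₀ h₀).args) (hfresh : t ∉ bodyTerms ρ₀ h₀)
    (hmarked : markedIn m (skolemAtom ρ₀ h₀) t') :
    ∀ n, ∀ β ∈ chaseStage R I n, t ∈ β.args → markedIn m β t' := by
  intro n
  induction n with
  | zero => exact fun β hβ htβ => absurd ⟨β, hβ, htβ⟩ hI
  | succ n ih =>
    intro β hβ htβ
    rcases mem_chaseStage_succ.1 hβ with hβ | ⟨ρ, hρ, h, hbody, rfl⟩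
    · exact ih β hβ htβ
    by_cases hcopied : t ∈ bodyTerms ρ h
    · obtain ⟨a, ha, hta⟩ := hcopied
      exact markedIn_skolemAtom hm hρ ha (ih _ (hbody a ha) hta)
    · rwa [skolemAtom_eq_of_fresh_mem_args htβ hcopied ht hfresh]

theorem sticky_terms_stick_general (I : Inst) (R : Ruleset) (m : ℕ → Set ℕ)
    (hm : stickyMarking m (rsSet R))
    (t t' : GTerm) (α : GAtom)
    (htα : t ∈ α.args)
    (hbirth : ∃ i, α ∈ chaseStage (rsSet R) I (i + 1) ∧
      t ∉ adom (chaseStage (rsSet R) I i))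
    (i : ℕ) (hi : i ∈ m α.pred) (hit : α.args[i]? = some t') :
    ∀ β ∈ chase I (rsSet R), t ∈ β.args →
      ∃ j ∈ m β.pred, β.args[j]? = some t' := by
  obtain ⟨i₀, hα, hnew⟩ := hbirth
  rcases mem_chaseStage_succ.1 hα with hold | ⟨ρ₀, -, h₀, hbody, rfl⟩
  · exact absurd ⟨α, hold, htα⟩ hnew
  have hI : t ∉ adom I := fun ⟨γ, hγ, htγ⟩ =>
    hnew ⟨γ, chaseStage_mono _ I (Nat.zero_le i₀) hγ, htγ⟩
  have hfresh : t ∉ bodyTerms ρ₀ h₀ := fun ⟨a, ha, hta⟩ => hnew ⟨_, hbody a ha, hta⟩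
  intro β hβ htβ
  obtain ⟨n, hβn⟩ := Set.mem_iUnion.1 hβ
  exact markedIn_of_mem_chaseStage hm hI htα hfresh ⟨i, hi, hit⟩ n β hβn htβ

/-- Let `I` be an instance, `R` a sticky ruleset (with
sticky marking `m`), and `t` a term of `chase(I,R)` with birth atom `α`. If
`t'` occurs at a marked position of `α`, then every atom `β` of `chase(I,R)`
containing `t` also contains `t'` at a marked position. -/
theorem sticky_terms_stick (I : Inst) (R : Ruleset) (m : ℕ → Set ℕ)
    (hm : stickyMarking m (rsSet R))
    (t t' : GTerm) (α : GAtom)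
    (hα : α ∈ chase I (rsSet R)) (htα : t ∈ α.args)
    (hbirth : ∃ i, α ∈ chaseStage (rsSet R) I (i + 1) ∧
      t ∉ adom (chaseStage (rsSet R) I i))
    (i : ℕ) (hi : i ∈ m α.pred) (hit : α.args[i]? = some t') :
    ∀ β ∈ chase I (rsSet R), t ∈ β.args →
      ∃ j ∈ m β.pred, β.args[j]? = some t' :=
  sticky_terms_stick_general I R m hm t t' α htα hbirth i hi hit
end
end
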